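/- arXiv:2209.05721 — 2 statements merged into one kernel-verified Lean document; each statement's English description precedes it below -/
import Mathlib

section
/- For p ∈ (1, ∞), the function Q̃_p(q) := 2E_{1,p}(q) - K_{1,p}(q) is strictly decreasing and strictly concave on [0, 1), and if p > 2 then lim_{q↑1} Q̃_p(q) = -K_{1,p}(1)/(p - 1), which is a finite negative number. -/
open Real Filter

/-- The complete `p`-elliptic integral of the first kind. -/
noncomputable def K1 (p q : ℝ) : ℝ :=
  ∫ z in (0:ℝ)..1, (1 - q ^ 2 * z ^ 2) ^ (-(1/2) : ℝ) * (1 - z ^ 2) ^ (-(1 / p))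

/-- The complete `p`-elliptic integral of the second kind. -/
noncomputable def E1 (p q : ℝ) : ℝ :=
  ∫ z in (0:ℝ)..1, (1 - q ^ 2 * z ^ 2) ^ ((1/2) : ℝ) * (1 - z ^ 2) ^ (-(1 / p))

/-- The function `Q̃_p`. -/
noncomputable def Qt (p q : ℝ) : ℝ := 2 * E1 p q - K1 p q

/-- `K_{1,p}(1)` for `p > 2`. -/
noncomputable def K1one (p : ℝ) : ℝ :=
  ∫ z in (0:ℝ)..1, (1 - z ^ 2) ^ (-(1/2) - 1 / p)

/-!
With `g(u) = 2(1 - u²)^(1/2) - (1 - u²)^(-1/2)` one has `Q̃_p(q) = ∫₀¹ g(qz) (1 - z²)^(-1/p) dz`.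
Since `g'(u) = -u (2(1 - u²)^(-1/2) + (1 - u²)^(-3/2))` and `g''(u) = -3(1 - u²)^(-5/2)`, every
`q ↦ g(qz)` is strictly decreasing and strictly concave on `[0, 1)`, and so is their average against
the positive weight. As `q ↑ 1`, monotonicity of `g` gives `|g(qz)| ≤ |g(0)| + |g(z)|`, which is
integrable against the weight when `p > 2`; by dominated convergence the limit is
`∫₀¹ g(z) (1 - z²)^(-1/p) dz = 2A - B` with `A = ∫₀¹ (1 - z²)^(1/2 - 1/p) dz` and `B = K_{1,p}(1)`.
Differentiating `z (1 - z²)^(1/2 - 1/p)` gives `(2 - 2/p) A = (1 - 2/p) B`, whence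
`2A - B = -B/(p - 1)`.
-/

open MeasureTheory Set Topology

section DilationAverage

variable {f w : ℝ → ℝ} {s t : Set ℝ}

theorem strictAntiOn_intervalIntegral_comp_mul (hf : StrictAntiOn f t)
    (hst : ∀ q ∈ s, ∀ z ∈ Ioo (0:ℝ) 1, q * z ∈ t) (hw : ∀ z ∈ Ioo (0:ℝ) 1, 0 < w z)
    (hint : ∀ q ∈ s, IntervalIntegrable (fun z => f (q * z) * w z) volume 0 1) :
    StrictAntiOn (fun q => ∫ z in (0:ℝ)..1, f (q * z) * w z) s := by
  intro x hx y hy hxy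
  rw [← sub_pos, ← intervalIntegral.integral_sub (hint x hx) (hint y hy)]
  refine intervalIntegral.intervalIntegral_pos_of_pos_on ((hint x hx).sub (hint y hy))
    (fun z hz => ?_) one_pos
  have hlt : f (y * z) < f (x * z) :=
    hf (hst x hx z hz) (hst y hy z hz) (mul_lt_mul_of_pos_right hxy hz.1)
  nlinarith [hw z hz]

theorem strictConcaveOn_intervalIntegral_comp_mul (hs : Convex ℝ s) (hf : StrictConcaveOn ℝ t f)
    (hst : ∀ q ∈ s, ∀ z ∈ Ioo (0:ℝ) 1, q * z ∈ t) (hw : ∀ z ∈ Ioo (0:ℝ) 1, 0 < w z)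
    (hint : ∀ q ∈ s, IntervalIntegrable (fun z => f (q * z) * w z) volume 0 1) :
    StrictConcaveOn ℝ s (fun q => ∫ z in (0:ℝ)..1, f (q * z) * w z) := by
  refine ⟨hs, fun x hx y hy hxy a b ha hb hab => ?_⟩
  have hm : a • x + b • y ∈ s := hs hx hy ha.le hb.le hab
  have hcomb := ((hint x hx).const_mul a).add ((hint y hy).const_mul b)
  have hpos : 0 < ∫ z in (0:ℝ)..1,
      (f ((a • x + b • y) * z) * w z - (a * (f (x * z) * w z) + b * (f (y * z) * w z))) := by
    refine intervalIntegral.intervalIntegral_pos_of_pos_on ((hint _ hm).sub hcomb)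
      (fun z hz => ?_) one_pos
    have hxz : x * z ≠ y * z := fun h => hxy (mul_right_cancel₀ hz.1.ne' h)
    have hlt := hf.2 (hst x hx z hz) (hst y hy z hz) hxz ha hb hab
    simp only [smul_eq_mul] at hlt ⊢
    have hlin : a * (x * z) + b * (y * z) = (a * x + b * y) * z := by ring
    rw [hlin] at hlt
    nlinarith [hw z hz]
  rw [intervalIntegral.integral_sub (hint _ hm) hcomb, intervalIntegral.integral_add
    ((hint x hx).const_mul a) ((hint y hy).const_mul b), intervalIntegral.integral_const_mul,
    intervalIntegral.integral_const_mul] at hpos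
  simp only [smul_eq_mul] at hpos ⊢
  linarith

theorem tendsto_intervalIntegral_comp_mul_nhdsLT_one (hf : AntitoneOn f (Ico 0 1))
    (hfc : ContinuousOn f (Ico 0 1)) (hw : ∀ z ∈ Ioo (0:ℝ) 1, 0 ≤ w z)
    (hw_int : IntervalIntegrable w volume 0 1)
    (hfw : IntervalIntegrable (fun z => f z * w z) volume 0 1) :
    Tendsto (fun q => ∫ z in (0:ℝ)..1, f (q * z) * w z) (𝓝[<] 1)
      (𝓝 (∫ z in (0:ℝ)..1, f z * w z)) := by
  have hq : ∀ᶠ q in 𝓝[<] (1:ℝ), q ∈ Ioo (0:ℝ) 1 := Ioo_mem_nhdsLT one_pos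
  have hmem : ∀ q ∈ Ioo (0:ℝ) 1, ∀ z ∈ Icc (0:ℝ) 1, q * z ∈ Ico (0:ℝ) 1 := fun q hq z hz =>
    ⟨mul_nonneg hq.1.le hz.1, by nlinarith [mul_le_mul_of_nonneg_left hz.2 hq.1.le, hq.2]⟩
  apply intervalIntegral.tendsto_integral_filter_of_dominated_convergence
    (fun z => |f 0| * w z + ‖f z * w z‖)
  · filter_upwards [hq] with q hq
    refine (intervalIntegrable_iff.1 (hw_int.continuousOn_mul ?_)).aestronglyMeasurable
    rw [uIcc_of_le zero_le_one]
    exact hfc.comp (continuousOn_const.mul continuousOn_id) (hmem q hq)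
  · filter_upwards [hq] with q hq
    filter_upwards [volume.ae_ne 1] with z hz1 hz
    rw [uIoc_of_le zero_le_one] at hz
    have hz' : z ∈ Ioo (0:ℝ) 1 := ⟨hz.1, lt_of_le_of_ne hz.2 hz1⟩
    have hqz := hmem q hq z (Ioc_subset_Icc_self hz)
    have hle : f z ≤ f (q * z) :=
      hf hqz ⟨hz'.1.le, hz'.2⟩ (mul_le_of_le_one_left hz'.1.le hq.2.le)
    have hge : f (q * z) ≤ f 0 := hf ⟨le_rfl, one_pos⟩ hqz hqz.1
    rw [norm_mul, norm_mul, Real.norm_of_nonneg (hw z hz'), Real.norm_eq_abs, Real.norm_eq_abs]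
    have habs : |f (q * z)| ≤ |f 0| + |f z| := abs_le.2
      ⟨by linarith [neg_abs_le (f z), abs_nonneg (f 0)],
        by linarith [le_abs_self (f 0), abs_nonneg (f z)]⟩
    nlinarith [hw z hz']
  · exact (hw_int.const_mul _).add hfw.norm
  · filter_upwards [volume.ae_ne 1] with z hz1 hz
    rw [uIoc_of_le zero_le_one] at hz
    have hfz : ContinuousAt f z := hfc.continuousAt (Ico_mem_nhds hz.1 (lt_of_le_of_ne hz.2 hz1))
    have hlim : Tendsto (fun q : ℝ => q * z) (𝓝[<] 1) (𝓝 z) :=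
      ((continuous_mul_const z).tendsto' 1 z (one_mul z)).mono_left nhdsWithin_le_nhds
    exact ((hfz.tendsto.comp hlim).mul_const (w z))

end DilationAverage

section OneSubSqRpow

lemma hasDerivAt_one_sub_sq_rpow (c : ℝ) {u : ℝ} (hu : u ^ 2 < 1) :
    HasDerivAt (fun u : ℝ => (1 - u ^ 2) ^ c) (-2 * c * u * (1 - u ^ 2) ^ (c - 1)) u := by
  have hbase : HasDerivAt (fun u : ℝ => 1 - u ^ 2) (-(2 * u)) u := by
    simpa using (hasDerivAt_pow 2 u).const_sub 1
  convert hbase.rpow_const (p := c) (Or.inl (by linarith)) using 1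
  ring

lemma one_sub_sq_rpow_pos {z : ℝ} (hz : z ∈ Ioo (0:ℝ) 1) (c : ℝ) : 0 < (1 - z ^ 2) ^ c :=
  Real.rpow_pos_of_pos (by nlinarith [hz.1, hz.2]) c

lemma continuousOn_one_sub_sq_rpow (c : ℝ) :
    ContinuousOn (fun u : ℝ => (1 - u ^ 2) ^ c) (Ioo (-1) 1) := fun u hu =>
  (hasDerivAt_one_sub_sq_rpow c (by nlinarith [hu.1, hu.2])).continuousAt.continuousWithinAt

lemma intervalIntegrable_one_sub_sq_rpow {c : ℝ} (hc : -1 < c) :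
    IntervalIntegrable (fun z : ℝ => (1 - z ^ 2) ^ c) volume 0 1 := by
  have hsub : IntervalIntegrable (fun z : ℝ => (1 - z) ^ c) volume 0 1 := by
    simpa using
      ((intervalIntegral.intervalIntegrable_rpow' (a := 0) (b := 1) hc).comp_sub_left 1).symm
  have hadd : ContinuousOn (fun z : ℝ => (1 + z) ^ c) (uIcc 0 1) := by
    rw [uIcc_of_le zero_le_one]
    exact fun z hz => ContinuousAt.continuousWithinAt <|
      ContinuousAt.rpow_const (by fun_prop) (Or.inl (by linarith [hz.1]))
  refine (hsub.mul_continuousOn hadd).congr_uIoo fun z hz => ?_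
  rw [uIoo_of_le zero_le_one] at hz
  rw [show (1 - z ^ 2) = (1 - z) * (1 + z) by ring,
    Real.mul_rpow (by linarith [hz.2]) (by linarith [hz.1])]

lemma intervalIntegrable_comp_mul_mul_one_sub_sq_rpow {f : ℝ → ℝ}
    (hf : ContinuousOn f (Ioo (-1) 1)) {q : ℝ} (hq : q ∈ Ioo (-1) 1) {c : ℝ} (hc : -1 < c) :
    IntervalIntegrable (fun z => f (q * z) * (1 - z ^ 2) ^ c) volume 0 1 := by
  refine (intervalIntegrable_one_sub_sq_rpow hc).continuousOn_mul ?_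
  rw [uIcc_of_le zero_le_one]
  refine hf.comp (continuousOn_const.mul continuousOn_id) fun z hz => ?_
  constructor <;> nlinarith [hq.1, hq.2, hz.1, hz.2]

theorem integral_one_sub_sq_rpow_recurrence {a : ℝ} (ha : 0 < a) :
    (1 + 2 * a) * ∫ z in (0:ℝ)..1, (1 - z ^ 2) ^ a
      = 2 * a * ∫ z in (0:ℝ)..1, (1 - z ^ 2) ^ (a - 1) := by
  have hint := intervalIntegrable_one_sub_sq_rpow (show -1 < a by linarith)
  have hint' := intervalIntegrable_one_sub_sq_rpow (show -1 < a - 1 by linarith)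
  have hcont : ContinuousOn (fun z : ℝ => z * (1 - z ^ 2) ^ a) (Icc 0 1) :=
    (continuous_id.mul ((continuous_const.sub (continuous_pow 2)).rpow_const
      fun _ => Or.inr ha.le)).continuousOn
  have hderiv : ∀ z ∈ Ioo (0:ℝ) 1, HasDerivAt (fun z : ℝ => z * (1 - z ^ 2) ^ a)
      ((1 + 2 * a) * (1 - z ^ 2) ^ a - 2 * a * (1 - z ^ 2) ^ (a - 1)) z := by
    intro z hz
    have ht : 1 - z ^ 2 ≠ 0 := by nlinarith [hz.1, hz.2]
    refine (hasDerivAt_id' z).mul (hasDerivAt_one_sub_sq_rpow a (by nlinarith [hz.1, hz.2]))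
      |>.congr_deriv ?_
    rw [Real.rpow_sub_one ht]
    field_simp
    ring
  have hFTC := intervalIntegral.integral_eq_sub_of_hasDerivAt_of_le zero_le_one hcont hderiv
    ((hint.const_mul _).sub (hint'.const_mul _))
  rw [intervalIntegral.integral_sub (hint.const_mul _) (hint'.const_mul _),
    intervalIntegral.integral_const_mul, intervalIntegral.integral_const_mul] at hFTC
  norm_num [Real.zero_rpow ha.ne'] at hFTC
  linarith

end OneSubSqRpow

noncomputable def qtKernel (u : ℝ) : ℝ :=
  2 * (1 - u ^ 2) ^ ((1/2) : ℝ) - (1 - u ^ 2) ^ (-(1/2) : ℝ)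

section qtKernel

variable {u : ℝ}

lemma hasDerivAt_qtKernel (hu : u ^ 2 < 1) :
    HasDerivAt qtKernel (-u * (2 * (1 - u ^ 2) ^ (-(1/2) : ℝ) + (1 - u ^ 2) ^ (-(3/2) : ℝ))) u := by
  refine ((hasDerivAt_one_sub_sq_rpow _ hu).const_mul 2 |>.sub
    (hasDerivAt_one_sub_sq_rpow _ hu)).congr_deriv ?_
  norm_num
  ring

lemma hasDerivAt_deriv_qtKernel (hu : u ^ 2 < 1) :
    HasDerivAt (fun u => -u * (2 * (1 - u ^ 2) ^ (-(1/2) : ℝ) + (1 - u ^ 2) ^ (-(3/2) : ℝ)))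
      (-3 * (1 - u ^ 2) ^ (-(5/2) : ℝ)) u := by
  refine ((hasDerivAt_neg u).mul (((hasDerivAt_one_sub_sq_rpow _ hu).const_mul 2).add
    (hasDerivAt_one_sub_sq_rpow _ hu))).congr_deriv ?_
  have ht : 1 - u ^ 2 ≠ 0 := by linarith
  have h3 : (1 - u ^ 2) ^ (-(3/2) : ℝ) = (1 - u ^ 2) ^ (-(5/2) : ℝ) * (1 - u ^ 2) := by
    rw [← Real.rpow_add_one ht]; norm_num
  have h1 : (1 - u ^ 2) ^ (-(1/2) : ℝ) = (1 - u ^ 2) ^ (-(3/2) : ℝ) * (1 - u ^ 2) := by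
    rw [← Real.rpow_add_one ht]; norm_num
  norm_num
  rw [h1, h3]
  ring

lemma continuousOn_qtKernel : ContinuousOn qtKernel (Ioo (-1) 1) := fun _ hu =>
  (hasDerivAt_qtKernel (by nlinarith [hu.1, hu.2])).continuousAt.continuousWithinAt

lemma strictAntiOn_qtKernel : StrictAntiOn qtKernel (Ico 0 1) := by
  refine strictAntiOn_of_deriv_neg (convex_Ico 0 1)
    (continuousOn_qtKernel.mono (Ico_subset_Ioo_left (by norm_num))) fun u hu => ?_
  rw [interior_Ico] at hu
  have ht : 0 < 1 - u ^ 2 := by nlinarith [hu.1, hu.2]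
  rw [(hasDerivAt_qtKernel (by linarith)).deriv]
  have := Real.rpow_pos_of_pos ht (-(1/2))
  have := Real.rpow_pos_of_pos ht (-(3/2))
  nlinarith [hu.1]

lemma strictConcaveOn_qtKernel : StrictConcaveOn ℝ (Ioo (-1) 1) qtKernel := by
  refine strictConcaveOn_of_deriv2_neg' (convex_Ioo (-1) 1) continuousOn_qtKernel fun u hu => ?_
  have hu2 : u ^ 2 < 1 := by nlinarith [hu.1, hu.2]
  have hderiv : deriv qtKernel =ᶠ[𝓝 u]
      fun u => -u * (2 * (1 - u ^ 2) ^ (-(1/2) : ℝ) + (1 - u ^ 2) ^ (-(3/2) : ℝ)) := by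
    filter_upwards [isOpen_Ioo.mem_nhds hu] with v hv
    exact (hasDerivAt_qtKernel (by nlinarith [hv.1, hv.2])).deriv
  rw [Function.iterate_succ_apply, Function.iterate_one, hderiv.deriv_eq,
    (hasDerivAt_deriv_qtKernel hu2).deriv]
  have := Real.rpow_pos_of_pos (by linarith : (0:ℝ) < 1 - u ^ 2) (-(5/2))
  linarith

lemma qtKernel_mul_one_sub_sq_rpow (hu : u ^ 2 < 1) (c : ℝ) :
    qtKernel u * (1 - u ^ 2) ^ c
      = 2 * (1 - u ^ 2) ^ ((1/2) + c) - (1 - u ^ 2) ^ (-(1/2) + c) := by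
  have ht : 0 < 1 - u ^ 2 := by linarith
  rw [qtKernel, sub_mul, mul_assoc, Real.rpow_add ht, Real.rpow_add ht]

end qtKernel

lemma mul_mem_Ico_zero_one {q z : ℝ} (hq : q ∈ Ico (0:ℝ) 1) (hz : z ∈ Ioo (0:ℝ) 1) :
    q * z ∈ Ico (0:ℝ) 1 :=
  ⟨mul_nonneg hq.1 hz.1.le, by nlinarith [hq.1, hq.2, hz.1, hz.2]⟩

lemma eqOn_qtKernel_mul_one_sub_sq_rpow (p : ℝ) :
    EqOn (fun z => qtKernel z * (1 - z ^ 2) ^ (-(1 / p)))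
      (fun z => 2 * (1 - z ^ 2) ^ ((1/2 - 1 / p) : ℝ) - (1 - z ^ 2) ^ (-(1/2) - 1 / p))
      (Ioo 0 1) := fun z hz => by
  simp only [qtKernel_mul_one_sub_sq_rpow (by nlinarith [hz.1, hz.2] : z ^ 2 < 1), ← sub_eq_add_neg]

section Qt

variable {p : ℝ}

lemma neg_one_lt_neg_one_div (hp : 1 < p) : -1 < -(1 / p) := by
  rw [neg_lt_neg_iff, div_lt_one (by linarith)]
  exact hp

lemma intervalIntegrable_qtKernel_comp_mul (hp : 1 < p) {q : ℝ} (hq : q ∈ Ioo (-1) 1) :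
    IntervalIntegrable (fun z => qtKernel (q * z) * (1 - z ^ 2) ^ (-(1 / p))) volume 0 1 :=
  intervalIntegrable_comp_mul_mul_one_sub_sq_rpow continuousOn_qtKernel hq
    (neg_one_lt_neg_one_div hp)

lemma Qt_eq_integral_qtKernel (hp : 1 < p) {q : ℝ} (hq : q ∈ Ioo (-1) 1) :
    Qt p q = ∫ z in (0:ℝ)..1, qtKernel (q * z) * (1 - z ^ 2) ^ (-(1 / p)) := by
  have hE := intervalIntegrable_comp_mul_mul_one_sub_sq_rpow
    (continuousOn_one_sub_sq_rpow ((1/2) : ℝ)) hq (neg_one_lt_neg_one_div hp)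
  have hK := intervalIntegrable_comp_mul_mul_one_sub_sq_rpow
    (continuousOn_one_sub_sq_rpow (-(1/2) : ℝ)) hq (neg_one_lt_neg_one_div hp)
  simp only [mul_pow] at hE hK
  rw [Qt, E1, K1, ← intervalIntegral.integral_const_mul,
    ← intervalIntegral.integral_sub (hE.const_mul 2) hK]
  congr 1 with z
  simp only [qtKernel, mul_pow]
  ring

lemma eqOn_integral_qtKernel_Qt (hp : 1 < p) :
    EqOn (fun q => ∫ z in (0:ℝ)..1, qtKernel (q * z) * (1 - z ^ 2) ^ (-(1 / p))) (Qt p)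
      (Ico 0 1) := fun _ hq =>
  (Qt_eq_integral_qtKernel hp (Ico_subset_Ioo_left (by norm_num) hq)).symm

theorem strictAntiOn_Qt (hp : 1 < p) : StrictAntiOn (Qt p) (Ico 0 1) :=
  (strictAntiOn_intervalIntegral_comp_mul strictAntiOn_qtKernel
    (fun _ hq _ hz => mul_mem_Ico_zero_one hq hz) (fun _ hz => one_sub_sq_rpow_pos hz _)
    fun _ hq => intervalIntegrable_qtKernel_comp_mul hp (Ico_subset_Ioo_left (by norm_num) hq)
  ).congr (eqOn_integral_qtKernel_Qt hp)

theorem strictConcaveOn_Qt (hp : 1 < p) : StrictConcaveOn ℝ (Ico 0 1) (Qt p) :=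
  (strictConcaveOn_intervalIntegral_comp_mul (convex_Ico 0 1)
    (strictConcaveOn_qtKernel.subset (Ico_subset_Ioo_left (by norm_num)) (convex_Ico 0 1))
    (fun _ hq _ hz => mul_mem_Ico_zero_one hq hz) (fun _ hz => one_sub_sq_rpow_pos hz _)
    fun _ hq => intervalIntegrable_qtKernel_comp_mul hp (Ico_subset_Ioo_left (by norm_num) hq)
  ).congr (eqOn_integral_qtKernel_Qt hp)

variable (hp : 2 < p)
include hp

lemma half_sub_one_div_pos : 0 < 1/2 - 1 / p := by
  have : 1 / p < 1 / 2 := by gcongr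
  linarith

lemma K1one_pos : 0 < K1one p :=
  intervalIntegral.intervalIntegral_pos_of_pos_on
    (intervalIntegrable_one_sub_sq_rpow (by linarith [half_sub_one_div_pos hp]))
    (fun _ hz => one_sub_sq_rpow_pos hz _) one_pos

lemma integral_qtKernel_mul_one_sub_sq_rpow :
    ∫ z in (0:ℝ)..1, qtKernel z * (1 - z ^ 2) ^ (-(1 / p)) = -K1one p / (p - 1) := by
  have ha := half_sub_one_div_pos hp
  have hrec := integral_one_sub_sq_rpow_recurrence ha
  rw [show 1/2 - 1 / p - 1 = -(1/2) - 1 / p by ring, ← K1one] at hrec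
  rw [intervalIntegral.integral_congr_Ioo_of_le zero_le_one (eqOn_qtKernel_mul_one_sub_sq_rpow p),
    intervalIntegral.integral_sub ((intervalIntegrable_one_sub_sq_rpow (by linarith)).const_mul 2)
      (intervalIntegrable_one_sub_sq_rpow (by linarith)),
    intervalIntegral.integral_const_mul, ← K1one, eq_div_iff (by linarith)]
  set A := ∫ z in (0:ℝ)..1, (1 - z ^ 2) ^ ((1/2 - 1 / p) : ℝ)
  linear_combination p * hrec + 2 * (A - K1one p) * mul_inv_cancel₀ (by positivity : p ≠ 0)

theorem tendsto_Qt_nhdsLT_one : Tendsto (Qt p) (𝓝[<] 1) (𝓝 (-K1one p / (p - 1))) := by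
  have ha := half_sub_one_div_pos hp
  have hfw := (((intervalIntegrable_one_sub_sq_rpow (by linarith)).const_mul 2).sub
    (intervalIntegrable_one_sub_sq_rpow (by linarith))).congr_uIoo
    (uIoo_of_le (zero_le_one' ℝ) ▸ (eqOn_qtKernel_mul_one_sub_sq_rpow p).symm)
  have hlim := tendsto_intervalIntegral_comp_mul_nhdsLT_one strictAntiOn_qtKernel.antitoneOn
    (continuousOn_qtKernel.mono (Ico_subset_Ioo_left (by norm_num)))
    (fun _ hz => (one_sub_sq_rpow_pos hz _).le)
    (intervalIntegrable_one_sub_sq_rpow (neg_one_lt_neg_one_div (by linarith))) hfw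
  rw [integral_qtKernel_mul_one_sub_sq_rpow hp] at hlim
  refine hlim.congr' ?_
  filter_upwards [Ioo_mem_nhdsLT (show (-1:ℝ) < 1 by norm_num)] with q hq
  exact (Qt_eq_integral_qtKernel (by linarith) hq).symm

end Qt

theorem Qt_strictAnti_strictConcave (p : ℝ) (hp : 1 < p) :
    StrictAntiOn (Qt p) (Set.Ico (0:ℝ) 1) ∧
    StrictConcaveOn ℝ (Set.Ico (0:ℝ) 1) (Qt p) ∧
    (2 < p →
      Tendsto (Qt p) (nhdsWithin 1 (Set.Iio 1)) (nhds (-(K1one p) / (p - 1))) ∧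
      -(K1one p) / (p - 1) < 0) :=
  ⟨strictAntiOn_Qt hp, strictConcaveOn_Qt hp, fun hp2 =>
    ⟨tendsto_Qt_nhdsLT_one hp2,
      div_neg_of_neg_of_pos (neg_neg_of_pos (K1one_pos hp2)) (by linarith)⟩⟩
end

section
/- If 1 < p₁ < p₂ < ∞, then Q_{p₁}(q) < Q_{p₂}(q) for every q ∈ (0, 1). -/
open Real

/-- The ratio function `Q_p`. -/
noncomputable def Qp (p q : ℝ) : ℝ := 2 * E1 p q / K1 p q - 1

/-!
Put `w z := (1 - q²z²)^(-1/2) (1 - z²)^(-1/p₁)`, `f z := 1 - q²z²` and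
`g z := (1 - z²)^(1/p₁ - 1/p₂)`. Over `(0, 1)` we have `K_{1,p₁} = ∫ w`, `E_{1,p₁} = ∫ f w`,
`K_{1,p₂} = ∫ g w` and `E_{1,p₂} = ∫ f g w`. Both `f` and `g` are strictly decreasing there, so
the strict form of Chebyshev's integral inequality, `∫ f w · ∫ g w < ∫ f g w · ∫ w`, reads
`E_{1,p₁} K_{1,p₂} < E_{1,p₂} K_{1,p₁}`. Chebyshev's inequality in turn comes from integrating
the kernel `(f x - f y)(g x - g y) w x w y`, which is positive off the diagonal, over the square.
-/
open MeasureTheory Set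

section Chebyshev

variable {α : Type*} {f g w : α → ℝ}

def chebyshevKernel (f g w : α → ℝ) (z : α × α) : ℝ :=
  (f z.1 - f z.2) * (g z.1 - g z.2) * (w z.1 * w z.2)

theorem chebyshevKernel_eq (z : α × α) :
    chebyshevKernel f g w z =
      (f z.1 * g z.1 * w z.1 * w z.2 + w z.1 * (f z.2 * g z.2 * w z.2)) -
        (f z.1 * w z.1 * (g z.2 * w z.2) + g z.1 * w z.1 * (f z.2 * w z.2)) := by
  unfold chebyshevKernel; ring

variable [MeasurableSpace α] {μ : Measure α}
  (hw : Integrable w μ) (hfw : Integrable (fun x => f x * w x) μ)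
  (hgw : Integrable (fun x => g x * w x) μ) (hfgw : Integrable (fun x => f x * g x * w x) μ)
include hw hfw hgw hfgw

theorem integrable_chebyshevKernel : Integrable (chebyshevKernel f g w) (μ.prod μ) := by
  simp_rw [funext chebyshevKernel_eq]
  exact ((hfgw.mul_prod hw).add (hw.mul_prod hfgw)).sub
    ((hfw.mul_prod hgw).add (hgw.mul_prod hfw))

theorem integral_chebyshevKernel [SFinite μ] :
    ∫ z, chebyshevKernel f g w z ∂(μ.prod μ) =
      2 * ((∫ x, f x * g x * w x ∂μ) * (∫ x, w x ∂μ) -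
        (∫ x, f x * w x ∂μ) * ∫ x, g x * w x ∂μ) := by
  have h₁ := hfgw.mul_prod hw
  have h₂ := hw.mul_prod hfgw
  have h₃ := hfw.mul_prod hgw
  have h₄ := hgw.mul_prod hfw
  simp_rw [funext chebyshevKernel_eq]
  have hsub := integral_sub (h₁.add h₂) (h₃.add h₄)
  simp only [Pi.add_apply] at hsub
  rw [hsub, integral_add h₁ h₂, integral_add h₃ h₄,
    integral_prod_mul (fun x => f x * g x * w x) w, integral_prod_mul w (fun x => f x * g x * w x),
    integral_prod_mul (fun x => f x * w x) (fun x => g x * w x),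
    integral_prod_mul (fun x => g x * w x) (fun x => f x * w x)]
  ring

end Chebyshev

theorem chebyshevKernel_pos {β : Type*} [LinearOrder β] {s : Set β} {f g w : β → ℝ}
    (hf : StrictAntiOn f s) (hg : StrictAntiOn g s) (hw : ∀ x ∈ s, 0 < w x) {z : β × β}
    (hz : z ∈ s ×ˢ s) (hne : z.1 ≠ z.2) : 0 < chebyshevKernel f g w z := by
  obtain ⟨x, y⟩ := z
  obtain ⟨hx, hy⟩ := hz
  refine mul_pos ?_ (mul_pos (hw x hx) (hw y hy))
  rcases hne.lt_or_gt with hxy | hyx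
  · exact mul_pos (sub_pos.2 (hf hx hy hxy)) (sub_pos.2 (hg hx hy hxy))
  · exact mul_pos_of_neg_of_neg (sub_neg.2 (hf hy hx hyx)) (sub_neg.2 (hg hy hx hyx))

theorem setIntegral_mul_lt_of_strictAntiOn {a b : ℝ} (hab : a < b) {f g w : ℝ → ℝ}
    (hf : StrictAntiOn f (Ioo a b)) (hg : StrictAntiOn g (Ioo a b))
    (hw₀ : ∀ x ∈ Ioo a b, 0 < w x) (hw : IntegrableOn w (Ioo a b))
    (hfw : IntegrableOn (fun x => f x * w x) (Ioo a b))
    (hgw : IntegrableOn (fun x => g x * w x) (Ioo a b))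
    (hfgw : IntegrableOn (fun x => f x * g x * w x) (Ioo a b)) :
    (∫ x in Ioo a b, f x * w x) * (∫ x in Ioo a b, g x * w x) <
      (∫ x in Ioo a b, f x * g x * w x) * ∫ x in Ioo a b, w x := by
  set I := Ioo a b
  obtain ⟨m, ham, hmb⟩ := exists_between hab
  have hI : MeasurableSet (I ×ˢ I) := measurableSet_Ioo.prod measurableSet_Ioo
  have hprod : (volume.restrict I).prod (volume.restrict I) =
      (volume.prod volume).restrict (I ×ˢ I) := Measure.prod_restrict _ _
  have hnonneg : 0 ≤ᵐ[(volume.restrict I).prod (volume.restrict I)] chebyshevKernel f g w := by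
    rw [hprod]
    filter_upwards [ae_restrict_mem hI] with z hz
    rcases eq_or_ne z.1 z.2 with heq | hne
    · simp [chebyshevKernel, heq]
    · exact (chebyshevKernel_pos hf hg hw₀ hz hne).le
  have hbox : Ioo a m ×ˢ Ioo m b ⊆ Function.support (chebyshevKernel f g w) ∩ I ×ˢ I := by
    rintro ⟨x, y⟩ ⟨⟨hax, hxm⟩, ⟨hmy, hyb⟩⟩
    have hz : (x, y) ∈ I ×ˢ I := ⟨⟨hax, hxm.trans hmb⟩, ⟨ham.trans hmy, hyb⟩⟩
    exact ⟨(chebyshevKernel_pos hf hg hw₀ hz (hxm.trans hmy).ne).ne', hz⟩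
  have hpos :
      0 < ∫ z, chebyshevKernel f g w z ∂(volume.restrict I).prod (volume.restrict I) := by
    rw [integral_pos_iff_support_of_nonneg_ae hnonneg (integrable_chebyshevKernel hw hfw hgw hfgw),
      hprod, Measure.restrict_apply' hI]
    refine lt_of_lt_of_le ?_ (measure_mono hbox)
    rw [Measure.prod_prod, Real.volume_Ioo, Real.volume_Ioo]
    exact ENNReal.mul_pos (ENNReal.ofReal_pos.2 (sub_pos.2 ham)).ne'
      (ENNReal.ofReal_pos.2 (sub_pos.2 hmb)).ne'
  rw [integral_chebyshevKernel hw hfw hgw hfgw] at hpos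
  linarith

noncomputable def K1Integrand (p q z : ℝ) : ℝ :=
  (1 - q ^ 2 * z ^ 2) ^ (-(1/2) : ℝ) * (1 - z ^ 2) ^ (-(1 / p))

section K1Integrand

variable {p q z : ℝ}

lemma one_sub_sq_pos_of_mem_Ioo (hz : z ∈ Ioo (0:ℝ) 1) : 0 < 1 - z ^ 2 := by
  nlinarith [hz.1, hz.2]

lemma one_sub_sq_mul_sq_pos (hq : q ^ 2 < 1) (hz : z ∈ Ioo (0:ℝ) 1) :
    0 < 1 - q ^ 2 * z ^ 2 := by
  nlinarith [one_sub_sq_pos_of_mem_Ioo hz, sq_nonneg q]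

lemma continuousOn_K1Integrand (hq : q ^ 2 < 1) : ContinuousOn (K1Integrand p q) (Ioo 0 1) :=
  ((continuousOn_const.sub (by fun_prop)).rpow_const fun z hz =>
      Or.inl (one_sub_sq_mul_sq_pos hq hz).ne').mul
    ((continuousOn_const.sub (by fun_prop)).rpow_const fun z hz =>
      Or.inl (one_sub_sq_pos_of_mem_Ioo hz).ne')

lemma K1Integrand_pos (hq : q ^ 2 < 1) (hz : z ∈ Ioo (0:ℝ) 1) : 0 < K1Integrand p q z :=
  mul_pos (rpow_pos_of_pos (one_sub_sq_mul_sq_pos hq hz) _)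
    (rpow_pos_of_pos (one_sub_sq_pos_of_mem_Ioo hz) _)

/-- Dominated by `(1 - q ^ 2) ^ (-1/2) * (1 - z) ^ (-1/p)`, integrable since `1/p < 1`. -/
lemma integrableOn_K1Integrand (hp : 1 < p) (hq : q ^ 2 < 1) :
    IntegrableOn (K1Integrand p q) (Ioo 0 1) := by
  have hp₀ : 0 < 1 / p := by positivity
  have hp₁ : 1 / p < 1 := (div_lt_one (by linarith)).2 hp
  have hsing : IntegrableOn (fun z : ℝ => (1 - z) ^ (-(1 / p))) (Ioo 0 1) := by
    have h := (intervalIntegral.intervalIntegrable_rpow' (a := 0) (b := 1)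
      (r := -(1 / p)) (by linarith)).comp_sub_left 1
    simp only [sub_zero, sub_self] at h
    exact (intervalIntegrable_iff_integrableOn_Ioo_of_le zero_le_one).mp h.symm
  refine (hsing.const_mul ((1 - q ^ 2) ^ (-(1/2) : ℝ))).mono'
    ((continuousOn_K1Integrand hq).aestronglyMeasurable measurableSet_Ioo) ?_
  filter_upwards [ae_restrict_mem measurableSet_Ioo] with z hz
  rw [Real.norm_of_nonneg (K1Integrand_pos hq hz).le]
  have hz₁ : 0 < 1 - z := by linarith [hz.2]
  have hz₂ := one_sub_sq_pos_of_mem_Ioo hz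
  exact mul_le_mul
    (rpow_le_rpow_of_nonpos (by linarith) (by nlinarith [mul_nonneg (sq_nonneg q) hz₂.le])
      (by norm_num))
    (rpow_le_rpow_of_nonpos hz₁ (by nlinarith [hz.1, hz.2]) (by linarith))
    (rpow_pos_of_pos hz₂ _).le (rpow_nonneg (by linarith) _)

end K1Integrand

section Representation

variable {p q : ℝ}

lemma K1_eq_setIntegral : K1 p q = ∫ z in Ioo 0 1, K1Integrand p q z := by
  rw [K1, intervalIntegral.integral_of_le zero_le_one, integral_Ioc_eq_integral_Ioo]
  rfl

lemma E1_eq_setIntegral (hq : q ^ 2 < 1) :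
    E1 p q = ∫ z in Ioo 0 1, (1 - q ^ 2 * z ^ 2) * K1Integrand p q z := by
  rw [E1, intervalIntegral.integral_of_le zero_le_one, integral_Ioc_eq_integral_Ioo]
  refine setIntegral_congr_fun measurableSet_Ioo fun z hz => ?_
  rw [K1Integrand, ← mul_assoc, ← rpow_one_add' (one_sub_sq_mul_sq_pos hq hz).le (by norm_num)]
  norm_num

lemma K1Integrand_eq_rpow_mul (p₁ : ℝ) {z : ℝ} (hz : z ∈ Ioo (0:ℝ) 1) :
    K1Integrand p q z = (1 - z ^ 2) ^ (1 / p₁ - 1 / p) * K1Integrand p₁ q z := by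
  rw [K1Integrand, K1Integrand, mul_left_comm, ← rpow_add (one_sub_sq_pos_of_mem_Ioo hz)]
  ring_nf

lemma K1_eq_setIntegral_rpow_mul (p₁ : ℝ) :
    K1 p q = ∫ z in Ioo 0 1, (1 - z ^ 2) ^ (1 / p₁ - 1 / p) * K1Integrand p₁ q z := by
  rw [K1_eq_setIntegral]
  exact setIntegral_congr_fun measurableSet_Ioo fun z hz => K1Integrand_eq_rpow_mul p₁ hz

lemma E1_eq_setIntegral_rpow_mul (p₁ : ℝ) (hq : q ^ 2 < 1) :
    E1 p q = ∫ z in Ioo 0 1,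
      (1 - q ^ 2 * z ^ 2) * (1 - z ^ 2) ^ (1 / p₁ - 1 / p) * K1Integrand p₁ q z := by
  rw [E1_eq_setIntegral hq]
  refine setIntegral_congr_fun measurableSet_Ioo fun z hz => ?_
  rw [K1Integrand_eq_rpow_mul p₁ hz, mul_assoc]

lemma K1_pos (hp : 1 < p) (hq : q ^ 2 < 1) : 0 < K1 p q :=
  intervalIntegral.intervalIntegral_pos_of_pos_on
    ((intervalIntegrable_iff_integrableOn_Ioo_of_le zero_le_one).2
      (integrableOn_K1Integrand hp hq))
    (fun _ hz => K1Integrand_pos hq hz) zero_lt_one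

end Representation

lemma strictAntiOn_one_sub_sq_mul_sq {q : ℝ} (hq : q ≠ 0) :
    StrictAntiOn (fun z : ℝ => 1 - q ^ 2 * z ^ 2) (Ici 0) := fun x hx y _ hxy => by
  have := pow_lt_pow_left₀ hxy hx two_ne_zero
  have := sq_pos_of_ne_zero hq
  dsimp only
  nlinarith

lemma strictAntiOn_one_sub_sq_rpow {c : ℝ} (hc : 0 < c) :
    StrictAntiOn (fun z : ℝ => (1 - z ^ 2) ^ c) (Icc 0 1) := fun x hx y hy hxy =>
  rpow_lt_rpow (by nlinarith [hy.1, hy.2]) (by nlinarith [hx.1]) hc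

theorem Qp_strictMono_in_p (p₁ p₂ : ℝ) (hp₁ : 1 < p₁) (hp₁₂ : p₁ < p₂) :
    ∀ q ∈ Set.Ioo (0:ℝ) 1, Qp p₁ q < Qp p₂ q := by
  intro q hq
  have hq₂ : q ^ 2 < 1 := by nlinarith [hq.1, hq.2]
  have hc : 0 < 1 / p₁ - 1 / p₂ := sub_pos.2 (one_div_lt_one_div_of_lt (by linarith) hp₁₂)
  have hf : Continuous fun z : ℝ => 1 - q ^ 2 * z ^ 2 := by fun_prop
  have hg : Continuous fun z : ℝ => (1 - z ^ 2) ^ (1 / p₁ - 1 / p₂) :=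
    (continuous_rpow_const hc.le).comp (by fun_prop)
  have hw := integrableOn_K1Integrand hp₁ hq₂
  have hmul {φ : ℝ → ℝ} (hφ : Continuous φ) :
      IntegrableOn (fun z => φ z * K1Integrand p₁ q z) (Ioo 0 1) :=
    hw.continuousOn_mul_of_subset hφ.continuousOn isCompact_Icc measurableSet_Ioo
      Ioo_subset_Icc_self
  have key := setIntegral_mul_lt_of_strictAntiOn zero_lt_one
    ((strictAntiOn_one_sub_sq_mul_sq hq.1.ne').mono
      (Ioo_subset_Icc_self.trans Icc_subset_Ici_self))
    ((strictAntiOn_one_sub_sq_rpow hc).mono Ioo_subset_Icc_self)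
    (fun z hz => K1Integrand_pos hq₂ hz) hw (hmul hf) (hmul hg) (hmul (hf.mul hg))
  rw [← E1_eq_setIntegral hq₂, ← K1_eq_setIntegral_rpow_mul, ← E1_eq_setIntegral_rpow_mul _ hq₂,
    ← K1_eq_setIntegral] at key
  have hlt := (div_lt_div_iff₀ (K1_pos hp₁ hq₂) (K1_pos (hp₁.trans hp₁₂) hq₂)).2 key
  simp only [Qp, mul_div_assoc]
  linarith
end
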